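/- If m, r ∈ ℕ satisfy 2 < r and 2r ≤ m, then u_r + u_{m−r} ≥ u_1 + u_{m−1}. -/
import Mathlib


variable {V : Type} [Fintype V] [DecidableEq V]

/-- The `k`-th triangular number `t_k = C(k+1,2)`. -/
def tri (k : ℕ) : ℕ := (k + 1).choose 2

/-- A natural number is triangular if it equals `t_k` for some `k`. -/
def IsTriangular (m : ℕ) : Prop := ∃ k, m = tri k

/-- `uval r = max {k : t_k ≤ r}`. -/
def uval (r : ℕ) : ℕ := Nat.findGreatest (fun k => tri k ≤ r) r

lemma tri_succ (k : ℕ) : tri (k + 1) = tri k + (k + 1) := by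
  show (k + 2).choose 2 = (k + 1).choose 2 + (k + 1)
  rw [Nat.choose_succ_succ (k + 1) 1, Nat.choose_one_right]
  simp [Nat.succ_eq_add_one]
  omega

lemma two_tri (k : ℕ) : 2 * tri k = k * (k + 1) := by
  induction k with
  | zero => simp [tri]
  | succ n ih => rw [tri_succ]; ring_nf; ring_nf at ih; omega

lemma le_tri (k : ℕ) : k ≤ tri k := by
  have := two_tri k; nlinarith

lemma tri_mono {a b : ℕ} (h : a ≤ b) : tri a ≤ tri b := by
  have ha := two_tri a; have hb := two_tri b
  have : a * (a + 1) ≤ b * (b + 1) := Nat.mul_le_mul h (by omega)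
  omega

lemma tri_zero : tri 0 = 0 := rfl

lemma tri_two : tri 2 = 3 := rfl

lemma tri_uval_le (r : ℕ) : tri (uval r) ≤ r := by
  unfold uval
  exact Nat.findGreatest_spec (P := fun k => tri k ≤ r) (Nat.zero_le r)
    (by show tri 0 ≤ r; rw [tri_zero]; exact Nat.zero_le r)

lemma lt_tri_uval_succ (r : ℕ) : r < tri (uval r + 1) := by
  unfold uval
  by_cases h : Nat.findGreatest (fun k => tri k ≤ r) r + 1 ≤ r
  · have := Nat.findGreatest_is_greatest (P := fun k => tri k ≤ r)
      (Nat.lt_succ_self _) h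
    simp only [not_le, Nat.succ_eq_add_one] at this
    omega
  · have := le_tri (Nat.findGreatest (fun k => tri k ≤ r) r + 1); omega

lemma two_le_uval {r : ℕ} (h : 3 ≤ r) : 2 ≤ uval r := by
  unfold uval
  exact Nat.le_findGreatest (by omega) (by rw [tri_two]; omega)

/-- If `2 < r` and `2r ≤ m`, then `u_r + u_{m-r} ≥ u_1 + u_{m-1}`. -/
theorem stmt10 (m r : ℕ) (h1 : 2 < r) (h2 : 2 * r ≤ m) :
    uval 1 + uval (m - 1) ≤ uval r + uval (m - r) := by
  have hu1 : uval 1 = 1 := by decide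
  set a := uval r with ha
  set b := uval (m - r) with hb
  have ha2 : 2 ≤ a := two_le_uval (by omega)
  have hb2 : 2 ≤ b := two_le_uval (by omega)
  have ha' : r < tri (a + 1) := lt_tri_uval_succ r
  have hb' : m - r < tri (b + 1) := lt_tri_uval_succ (m - r)
  have hab : a + b ≤ a * b := by
    have e1 : 2 * b ≤ a * b := Nat.mul_le_mul_right b ha2
    have e2 : 2 * a ≤ b * a := Nat.mul_le_mul_right a hb2
    have e3 : b * a = a * b := Nat.mul_comm b a
    omega
  have habm : m ≤ tri (a + b) := by
    have t1 := two_tri (a + 1)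
    have t2 := two_tri (b + 1)
    have t3 := two_tri (a + b)
    have hm : m = r + (m - r) := by omega
    nlinarith [hab, t1, t2, t3, ha', hb']
  have hc : tri (uval (m - 1)) ≤ m - 1 := tri_uval_le (m - 1)
  have hlt : uval (m - 1) < a + b := by
    by_contra h
    push_neg at h
    have := tri_mono h
    omega
  omega
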